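/- arXiv:1604.02304 — 6 statements merged into one kernel-verified Lean document; each statement's English description precedes it below -/
import Mathlib

section
/- Let η₁ ≤ ⋯ ≤ η_{n+1} be real numbers with partial sums σ_p = η₁ + ⋯ + η_p. If 1 ≤ p < q ≤ n+1 and σ_p / p = σ_q / q, then η₁ = η₂ = ⋯ = η_q. -/
/-!
Put `c = η_p`. Every term of `σ_p` is at most `c` and every term of `σ_q - σ_p` at least `c`, so
`(q - p) σ_p ≤ (q - p) p c ≤ p (σ_q - σ_p)`. Equality of the averages says that the two ends agree,
hence every one of the `q` terms equals `c`.
-/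

open Finset

variable {K : Type*} [Field K] [LinearOrder K] [IsStrictOrderedRing K]

theorem Finset.eq_const_of_card_mul_sum_eq_card_mul_sum {ι : Type*} {s t : Finset ι}
    {f : ι → K} {c : K} (hs : s.Nonempty) (ht : t.Nonempty)
    (hsc : ∀ i ∈ s, f i ≤ c) (htc : ∀ i ∈ t, c ≤ f i)
    (h : (#t : K) * ∑ i ∈ s, f i = #s * ∑ i ∈ t, f i) :
    (∀ i ∈ s, f i = c) ∧ ∀ i ∈ t, f i = c := by
  have hs₀ : (0 : K) < #s := by exact_mod_cast hs.card_pos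
  have ht₀ : (0 : K) < #t := by exact_mod_cast ht.card_pos
  have hS : ∑ i ∈ s, f i ≤ ∑ _i ∈ s, c := sum_le_sum hsc
  have hT : ∑ _i ∈ t, c ≤ ∑ i ∈ t, f i := sum_le_sum htc
  rw [sum_const, nsmul_eq_mul] at hS hT
  have hS_eq : ∑ i ∈ s, f i = ∑ _i ∈ s, c := by
    rw [sum_const, nsmul_eq_mul]
    nlinarith [mul_le_mul_of_nonneg_left hT hs₀.le]
  have hT_eq : ∑ _i ∈ t, c = ∑ i ∈ t, f i := by
    rw [sum_const, nsmul_eq_mul]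
    nlinarith [mul_le_mul_of_nonneg_left hS ht₀.le]
  exact ⟨(sum_eq_sum_iff_of_le hsc).1 hS_eq,
    fun i hi => ((sum_eq_sum_iff_of_le htc).1 hT_eq i hi).symm⟩

theorem MonotoneOn.eq_of_sum_range_div_eq {f : ℕ → K} {p q : ℕ}
    (hf : MonotoneOn f (Set.Iio q)) (hp : 0 < p) (hpq : p < q)
    (h : (∑ i ∈ range p, f i) / p = (∑ i ∈ range q, f i) / q) :
    ∀ i < q, f i = f (p - 1) := by
  have hcross : (#(Ico p q) : K) * ∑ i ∈ range p, f i = #(range p) * ∑ i ∈ Ico p q, f i := by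
    rw [← sum_range_add_sum_Ico f hpq.le,
      div_eq_div_iff (Nat.cast_pos.2 hp).ne' (Nat.cast_pos.2 (hp.trans hpq)).ne'] at h
    rw [Nat.card_Ico, card_range, Nat.cast_sub hpq.le]
    linear_combination h
  have hle {i j : ℕ} (hij : i ≤ j) (hj : j < q) : f i ≤ f j :=
    hf (show i < q by omega) hj hij
  obtain ⟨hlow, hhigh⟩ := eq_const_of_card_mul_sum_eq_card_mul_sum (c := f (p - 1))
    (nonempty_range_iff.2 hp.ne') (nonempty_Ico.2 hpq)
    (fun i hi => hle (by rw [mem_range] at hi; omega) (by omega))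
    (fun i hi => hle (by rw [mem_Ico] at hi; omega) (by rw [mem_Ico] at hi; omega)) hcross
  intro i hi
  rcases lt_or_ge i p with hip | hip
  · exact hlow i (mem_range.2 hip)
  · exact hhigh i (mem_Ico.2 ⟨hip, hi⟩)

/-- equality case of the averaged partial-sum inequality: if
`1 ≤ p < q ≤ n+1` and `σ_p / p = σ_q / q` then `η₁ = ⋯ = η_q`. -/
theorem avg_partial_sum_eq_case (n : ℕ) (η : Fin (n+1) → ℝ) (hmono : Monotone η)
    (p q : ℕ) (hp : 1 ≤ p) (hpq : p < q) (hq : q ≤ n + 1)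
    (heq : (∑ i ∈ Finset.range p, if h : i < n + 1 then η ⟨i, h⟩ else 0) / p =
      (∑ i ∈ Finset.range q, if h : i < n + 1 then η ⟨i, h⟩ else 0) / q) :
    ∀ i j : Fin (n+1), (i : ℕ) < q → (j : ℕ) < q → η i = η j := by
  set g : ℕ → ℝ := fun i => if h : i < n + 1 then η ⟨i, h⟩ else 0
  have hg (k : Fin (n + 1)) : g k = η k := dif_pos k.isLt
  have hg_mono : MonotoneOn g (Set.Iio q) := fun a ha b hb hab => by
    simp only [g, dif_pos (show a < n + 1 by grind), dif_pos (show b < n + 1 by grind)]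
    exact hmono hab
  have hconst := hg_mono.eq_of_sum_range_div_eq hp hpq heq
  intro i j hi hj
  rw [← hg i, ← hg j, hconst i hi, hconst j hj]
end

section
/- Let V be an m-dimensional real inner product space with orthonormal basis (fᵢ), S : V → V self-adjoint, and ω ∈ Λ^p V. Then ⟨S^{[p]}ω, ω⟩ = Σᵢ ⟨ι_{S(fᵢ)} ω, ι_{fᵢ} ω⟩, where ι denotes interior product (contraction). -/
noncomputable section
open Finset

/-- `m`-dimensional Euclidean space. -/
abbrev E (m : ℕ) := EuclideanSpace ℝ (Fin m)

/-- standard orthonormal basis vector -/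
def sb (m : ℕ) (i : Fin m) : E m := EuclideanSpace.single i 1

/-- the induced inner product on `p`-forms (computed via the standard basis) -/
def rInner (m p : ℕ) (f g : (Fin p → E m) → ℝ) : ℝ :=
  (Nat.factorial p : ℝ)⁻¹ *
    ∑ σ : Fin p → Fin m, f (fun k => sb m (σ k)) * g (fun k => sb m (σ k))

/-- the induced norm on `p`-forms -/
def rNorm (m p : ℕ) (f : (Fin p → E m) → ℝ) : ℝ := Real.sqrt (rInner m p f f)

/-- the derivation extension `S^{[p]}` of an endomorphism `S` to `p`-forms:
`S^{[p]}ω(X₁,…,X_p) = Σᵢ ω(X₁,…,S Xᵢ,…,X_p)` -/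
def sder (m : ℕ) (S : E m →ₗ[ℝ] E m) (p : ℕ) (f : (Fin p → E m) → ℝ) :
    (Fin p → E m) → ℝ :=
  fun X => ∑ i : Fin p, f (Function.update X i (S (X i)))

/-- interior product of a vector with a `(p+1)`-form -/
def iprod (m p : ℕ) (v : E m) (f : (Fin (p+1) → E m) → ℝ) : (Fin p → E m) → ℝ :=
  fun Y => f (Fin.cons v Y)

/-- wedge of a vector (via the metric) with a `p`-form -/
def wedgeV (m p : ℕ) (v : E m) (f : (Fin p → E m) → ℝ) : (Fin (p+1) → E m) → ℝ :=
  fun Y => ∑ i : Fin (p+1),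
    (-1 : ℝ) ^ (i : ℕ) * (inner ℝ v (Y i) : ℝ) * f (fun k => Y (i.succAbove k))

/-- interior product of the `s`-vector `X₁ ∧ ⋯ ∧ X_s` with an `(s+t)`-form:
`(Y₁,…,Y_t) ↦ ω(X_s,…,X₁,Y₁,…,Y_t)` -/
def iprodMulti (m s t : ℕ) (X : Fin s → E m) (f : (Fin (s+t) → E m) → ℝ) :
    (Fin t → E m) → ℝ :=
  fun Y => f (Fin.append (fun k => X k.rev) Y)

/-- wedge `X₁ ∧ ⋯ ∧ X_s ∧ ψ` of an `s`-tuple of vectors (via the metric) with a `t`-form -/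
def wedgeMulti (m s t : ℕ) (X : Fin s → E m) (f : (Fin t → E m) → ℝ) :
    (Fin (s+t) → E m) → ℝ :=
  fun Y => ((Nat.factorial s * Nat.factorial t : ℕ) : ℝ)⁻¹ *
    ∑ σ : Equiv.Perm (Fin (s+t)),
      ((Equiv.Perm.sign σ : ℤ) : ℝ) *
        Matrix.det (Matrix.of fun i j : Fin s =>
          (inner ℝ (X i) (Y (σ (Fin.castAdd t j))) : ℝ)) *
        f (fun k => Y (σ (Fin.natAdd s k)))

/-! By antisymmetry of `ω`, the `p + 1` summands of `S^{[p+1]}ω` pair equally with `ω`, which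
accounts for the ratio `(p + 1)! / p!` of the normalisations; splitting off the first index of
the basis expansion then gives `∑ⱼ ⟨ι_{S eⱼ} ω, ι_{eⱼ} ω⟩` for the standard basis `(eⱼ)`. For fixed
remaining arguments, `∑ⱼ L₁ eⱼ * L₂ eⱼ` is the inner product of the Riesz representatives of the
linear forms `L₁, L₂`, so it is the same for every orthonormal basis. -/

open RealInnerProductSpace in
theorem OrthonormalBasis.sum_apply_mul_apply_eq_inner {ι F : Type*} [Fintype ι]
    [NormedAddCommGroup F] [InnerProductSpace ℝ F] [CompleteSpace F]
    (b : OrthonormalBasis ι ℝ F) (L₁ L₂ : StrongDual ℝ F) :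
    ∑ i, L₁ (b i) * L₂ (b i) =
      ⟪(InnerProductSpace.toDual ℝ F).symm L₁, (InnerProductSpace.toDual ℝ F).symm L₂⟫ := by
  rw [← b.sum_inner_mul_inner]
  refine Finset.sum_congr rfl fun i _ => ?_
  rw [InnerProductSpace.toDual_symm_apply, real_inner_comm,
    InnerProductSpace.toDual_symm_apply]

theorem OrthonormalBasis.sum_apply_mul_apply_congr {ι κ F : Type*} [Fintype ι] [Fintype κ]
    [NormedAddCommGroup F] [InnerProductSpace ℝ F] [FiniteDimensional ℝ F]
    (b : OrthonormalBasis ι ℝ F) (c : OrthonormalBasis κ ℝ F) (L₁ L₂ : F →ₗ[ℝ] ℝ) :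
    ∑ i, L₁ (b i) * L₂ (b i) = ∑ j, L₁ (c j) * L₂ (c j) :=
  (b.sum_apply_mul_apply_eq_inner L₁.toContinuousLinearMap L₂.toContinuousLinearMap).trans
    (c.sum_apply_mul_apply_eq_inner _ _).symm

theorem AlternatingMap.map_comp_perm_mul_map_comp_perm {R M ι : Type*} [CommRing R]
    [AddCommGroup M] [Module R M] [Fintype ι] [DecidableEq ι] (ω : M [⋀^ι]→ₗ[R] R)
    (x y : ι → M) (c : Equiv.Perm ι) :
    ω (x ∘ c) * ω (y ∘ c) = ω x * ω y := by
  rw [ω.map_perm, ω.map_perm, Units.smul_def, Units.smul_def, smul_mul_smul_comm,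
    ← Units.val_mul, Int.units_mul_self, Units.val_one, one_smul]

theorem AlternatingMap.sum_map_update_mul_map_eq {R M ι : Type*} [CommRing R] [AddCommGroup M]
    [Module R M] [Fintype ι] {n : ℕ} (ω : M [⋀^Fin n]→ₗ[R] R) (v : ι → M) (g : M → M)
    (i j : Fin n) :
    ∑ σ : Fin n → ι, ω (Function.update (v ∘ σ) i (g (v (σ i)))) * ω (v ∘ σ) =
      ∑ σ : Fin n → ι, ω (Function.update (v ∘ σ) j (g (v (σ j)))) * ω (v ∘ σ) := by
  let c := Equiv.swap i j
  refine (Fintype.sum_equiv (Equiv.arrowCongr c.symm (Equiv.refl ι)) _ _ fun σ => ?_).symm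
  change _ = ω (Function.update ((v ∘ σ) ∘ c) i (g (v (σ (c i))))) * ω ((v ∘ σ) ∘ c)
  rw [← c.symm_apply_apply i, ← Function.update_comp_equiv, c.symm_apply_apply,
    ω.map_comp_perm_mul_map_comp_perm, Equiv.swap_apply_left]

theorem rInner_sder_eq_sum_rInner_iprod_sb (m p : ℕ) (S : E m →ₗ[ℝ] E m)
    (ω : (E m) [⋀^Fin (p+1)]→ₗ[ℝ] ℝ) :
    rInner m (p+1) (sder m S (p+1) ⇑ω) ⇑ω =
      ∑ j : Fin m, rInner m p (iprod m p (S (sb m j)) ⇑ω) (iprod m p (sb m j) ⇑ω) := by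
  have hterms : ∑ σ : Fin (p+1) → Fin m, sder m S (p+1) ω (sb m ∘ σ) * ω (sb m ∘ σ) =
      (p + 1) * ∑ σ : Fin (p+1) → Fin m,
        ω (Function.update (sb m ∘ σ) 0 (S (sb m (σ 0)))) * ω (sb m ∘ σ) := by
    simp only [sder, sum_mul, Function.comp_apply]
    rw [sum_comm, sum_congr rfl fun i _ => ω.sum_map_update_mul_map_eq (sb m) S i 0,
      sum_const, card_univ, Fintype.card_fin, nsmul_eq_mul]
    push_cast
    rfl
  have hsplit : ∑ σ : Fin (p+1) → Fin m,
        ω (Function.update (sb m ∘ σ) 0 (S (sb m (σ 0)))) * ω (sb m ∘ σ) =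
      ∑ j : Fin m, ∑ τ : Fin p → Fin m,
        ω (Fin.cons (S (sb m j)) (sb m ∘ τ)) * ω (Fin.cons (sb m j) (sb m ∘ τ)) := by
    rw [← Fintype.sum_prod_type', eq_comm]
    refine Fintype.sum_equiv (Fin.consEquiv fun _ => Fin m) _ _ fun jτ => ?_
    simp only [Fin.consEquiv, Equiv.coe_fn_mk, Fin.comp_cons, Fin.cons_zero, Fin.update_cons_zero]
  have hfact : ((p + 1).factorial : ℝ)⁻¹ * (p + 1) = (p.factorial : ℝ)⁻¹ := by
    rw [Nat.factorial_succ, Nat.cast_mul, mul_inv, mul_comm, ← mul_assoc]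
    push_cast
    rw [mul_inv_cancel₀ (by positivity), one_mul]
  calc rInner m (p+1) (sder m S (p+1) ⇑ω) ⇑ω
      = ((p + 1).factorial : ℝ)⁻¹ * (p + 1) * ∑ σ : Fin (p+1) → Fin m,
          ω (Function.update (sb m ∘ σ) 0 (S (sb m (σ 0)))) * ω (sb m ∘ σ) := by
        rw [mul_assoc, ← hterms]; rfl
    _ = ∑ j : Fin m, rInner m p (iprod m p (S (sb m j)) ⇑ω) (iprod m p (sb m j) ⇑ω) := by
        rw [hfact, hsplit, mul_sum]; rfl

theorem sum_rInner_iprod_orthonormalBasis_congr (m p : ℕ) (S : E m →ₗ[ℝ] E m)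
    (ω : (E m) [⋀^Fin (p+1)]→ₗ[ℝ] ℝ) (b c : OrthonormalBasis (Fin m) ℝ (E m)) :
    ∑ i, rInner m p (iprod m p (S (b i)) ⇑ω) (iprod m p (b i) ⇑ω) =
      ∑ i, rInner m p (iprod m p (S (c i)) ⇑ω) (iprod m p (c i) ⇑ω) := by
  simp only [rInner, iprod, ← mul_sum]
  rw [sum_comm]
  conv_rhs => rw [sum_comm]
  refine congrArg _ (sum_congr rfl fun τ _ => ?_)
  let L := ω.toMultilinearMap.toLinearMap (Fin.cons 0 fun k => sb m (τ k)) 0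
  have hL : ∀ x, L x = ω (Fin.cons x fun k => sb m (τ k)) := fun x => by
    simp [L, Fin.update_cons_zero]
  simpa only [LinearMap.comp_apply, hL] using b.sum_apply_mul_apply_congr c (L.comp S) L

theorem sder_inner_eq_sum_contractions_general (m p : ℕ) (S : E m →ₗ[ℝ] E m)
    (f : OrthonormalBasis (Fin m) ℝ (E m))
    (ω : (E m) [⋀^Fin (p+1)]→ₗ[ℝ] ℝ) :
    rInner m (p+1) (sder m S (p+1) ⇑ω) ⇑ω =
      ∑ i : Fin m, rInner m p (iprod m p (S (f i)) ⇑ω) (iprod m p (f i) ⇑ω) := by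
  have hsb : ⇑(EuclideanSpace.basisFun (Fin m) ℝ) = sb m :=
    funext fun j => by rw [EuclideanSpace.basisFun_apply]; rfl
  rw [rInner_sder_eq_sum_rInner_iprod_sb, ← hsb]
  exact sum_rInner_iprod_orthonormalBasis_congr m p S ω _ f

/-- for a self-adjoint `S`, an orthonormal basis `(fᵢ)` and a form `ω`,
`⟨S^{[p]}ω, ω⟩ = Σᵢ ⟨ι_{S fᵢ} ω, ι_{fᵢ} ω⟩`. -/
theorem sder_inner_eq_sum_contractions (m p : ℕ) (S : E m →ₗ[ℝ] E m)
    (hSsym : ∀ x y : E m, (inner ℝ (S x) y : ℝ) = inner ℝ x (S y))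
    (f : OrthonormalBasis (Fin m) ℝ (E m))
    (ω : (E m) [⋀^Fin (p+1)]→ₗ[ℝ] ℝ) :
    rInner m (p+1) (sder m S (p+1) ⇑ω) ⇑ω =
      ∑ i : Fin m, rInner m p (iprod m p (S (f i)) ⇑ω) (iprod m p (f i) ⇑ω) :=
  sder_inner_eq_sum_contractions_general m p S f ω
end
end

section
/- Let V be a finite-dimensional real inner product space, S : V → V self-adjoint, X₁,…,X_s ∈ V and ω ∈ Λ^p V with s ≤ p. Then S^{[p−s]}(ι_{X₁∧⋯∧X_s} ω) = ι_{X₁∧⋯∧X_s}(S^{[p]} ω) − ι_{S^{[s]}(X₁∧⋯∧X_s)} ω, where ι_{X₁∧⋯∧X_s} ω is the (p−s)-form (Y₁,…,Y_{p−s}) ↦ ω(X_s,…,X₁,Y₁,…,Y_{p−s}). -/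
noncomputable section
open Finset

/-! The derivation `S^{[s+t]}` evaluated on `(X_s,…,X₁,Y₁,…,Y_t)` splits into the terms where `S`
hits one of the first `s` slots, which after reversing the index give `ι_{S^{[s]}(X₁∧⋯∧X_s)} ω`,
and the terms where it hits one of the last `t` slots, which give `S^{[t]}(ι_{X₁∧⋯∧X_s} ω)`. -/

namespace Fin

variable {α : Type*} {s t : ℕ}

theorem update_append_castAdd (A : Fin s → α) (Y : Fin t → α) (i : Fin s) (v : α) :
    Function.update (append A Y) (castAdd t i) v = append (Function.update A i v) Y := by
  funext k
  refine addCases (fun j => ?_) (fun j => ?_) k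
  · simp [Function.update_apply]
  · simp [Function.update_apply, Fin.ext_iff]
    omega

theorem update_append_natAdd (A : Fin s → α) (Y : Fin t → α) (i : Fin t) (v : α) :
    Function.update (append A Y) (natAdd s i) v = append A (Function.update Y i v) := by
  funext k
  refine addCases (fun j => ?_) (fun j => ?_) k
  · simp [Function.update_apply, Fin.ext_iff]
    omega
  · simp [Function.update_apply]

theorem update_comp_rev (X : Fin s → α) (j : Fin s) (v : α) :
    (fun k => Function.update X j v k.rev) = Function.update (fun k => X k.rev) j.rev v := by
  funext k
  simp [Function.update_apply, rev_eq_iff]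

end Fin

theorem sder_append {m s t : ℕ} (S : E m →ₗ[ℝ] E m) (f : (Fin (s + t) → E m) → ℝ)
    (A : Fin s → E m) (Y : Fin t → E m) :
    sder m S (s + t) f (Fin.append A Y) =
      ∑ i : Fin s, f (Fin.append (Function.update A i (S (A i))) Y) +
        sder m S t (fun Y' => f (Fin.append A Y')) Y := by
  simp only [sder, Fin.sum_univ_add, Fin.append_left, Fin.append_right,
    Fin.update_append_castAdd, Fin.update_append_natAdd]

theorem sder_iprodMulti_general (m s t : ℕ) (S : E m →ₗ[ℝ] E m)
    (X : Fin s → E m) (ω : (E m) [⋀^Fin (s+t)]→ₗ[ℝ] ℝ) (Y : Fin t → E m) :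
    sder m S t (iprodMulti m s t X ⇑ω) Y =
      iprodMulti m s t X (sder m S (s+t) ⇑ω) Y -
        ∑ j : Fin s, iprodMulti m s t (Function.update X j (S (X j))) ⇑ω Y := by
  have reindex : ∑ j : Fin s, iprodMulti m s t (Function.update X j (S (X j))) ω Y =
      ∑ i : Fin s, ω (Fin.append (Function.update (fun k => X k.rev) i (S (X i.rev))) Y) :=
    Fintype.sum_equiv Fin.revPerm _ _ fun j => by
      simp [iprodMulti, Fin.update_comp_rev]
  rw [reindex, iprodMulti, sder_append]
  exact (add_sub_cancel_left _ _).symm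

/-- for self-adjoint `S`, vectors `X₁,…,X_s` and an `(s+t)`-form `ω`,
`S^{[t]}(ι_{X₁∧⋯∧X_s} ω) = ι_{X₁∧⋯∧X_s}(S^{[s+t]} ω) − ι_{S^{[s]}(X₁∧⋯∧X_s)} ω`,
where `ι_{S^{[s]}(X₁∧⋯∧X_s)} ω = Σⱼ ι_{X₁∧⋯∧S Xⱼ∧⋯∧X_s} ω`. -/
theorem sder_iprodMulti (m s t : ℕ) (S : E m →ₗ[ℝ] E m)
    (hSsym : ∀ x y : E m, (inner ℝ (S x) y : ℝ) = inner ℝ x (S y))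
    (X : Fin s → E m) (ω : (E m) [⋀^Fin (s+t)]→ₗ[ℝ] ℝ) (Y : Fin t → E m) :
    sder m S t (iprodMulti m s t X ⇑ω) Y =
      iprodMulti m s t X (sder m S (s+t) ⇑ω) Y -
        ∑ j : Fin s, iprodMulti m s t (Function.update X j (S (X j))) ⇑ω Y :=
  sder_iprodMulti_general m s t S X ω Y
end
end

section
/- Let 0 = η₁ ≤ η₂ ≤ ⋯ ≤ η_{n+1} be real numbers with σ_k = η₁+⋯+η_k (so η₁ = 0 and all ηᵢ ≥ 0), and let 2 ≤ p ≤ n/2. Then the quantity A = (σ_p − σ_{n+1} + σ_{n+2−p})σ_{n+2−p} + η_{p+1}σ_{n+2−p} − (η₂²+⋯+η_n²) + η_{n+1}(η_{n+3−p}+⋯+η_n) satisfies A ≤ 0, provided additionally σ_p + σ_{n+2−p} ≤ σ_{n+1} and η_{n+3−p}+⋯+η_n ≤ σ_{p+1}. -/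
noncomputable section
open Finset

/-- 1-indexed access to the sequence `η₁ ≤ ⋯ ≤ η_{n+1}` -/
def eta1 (n : ℕ) (η : Fin (n+1) → ℝ) (i : ℕ) : ℝ :=
  if h : i - 1 < n + 1 then η ⟨i - 1, h⟩ else 0

/-- the partial sum `σ_k = η₁ + ⋯ + η_k` -/
def sig (n : ℕ) (η : Fin (n+1) → ℝ) (k : ℕ) : ℝ :=
  ∑ i ∈ Finset.Icc 1 k, eta1 n η i

set_option maxHeartbeats 1000000

/-- with `0 = η₁ ≤ ⋯ ≤ η_{n+1}`, `2 ≤ p ≤ n/2`,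
`σ_p + σ_{n+2−p} ≤ σ_{n+1}` and `η_{n+3−p}+⋯+η_n ≤ σ_{p+1}`, the quantity
`A = (σ_p − σ_{n+1} + σ_{n+2−p})σ_{n+2−p} + η_{p+1}σ_{n+2−p} − (η₂²+⋯+η_n²)
  + η_{n+1}(η_{n+3−p}+⋯+η_n)` is nonpositive. -/
theorem A_nonpos (n p : ℕ) (η : Fin (n+1) → ℝ) (hmono : Monotone η)
    (h1 : eta1 n η 1 = 0) (hp : 2 ≤ p) (hpn : 2 * p ≤ n)
    (haux1 : sig n η p + sig n η (n + 2 - p) ≤ sig n η (n + 1))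
    (haux2 : (∑ i ∈ Finset.Icc (n + 3 - p) n, eta1 n η i) ≤ sig n η (p + 1)) :
    (sig n η p - sig n η (n + 1) + sig n η (n + 2 - p)) * sig n η (n + 2 - p)
      + eta1 n η (p + 1) * sig n η (n + 2 - p)
      - (∑ i ∈ Finset.Icc 2 n, (eta1 n η i) ^ 2)
      + eta1 n η (n + 1) * (∑ i ∈ Finset.Icc (n + 3 - p) n, eta1 n η i) ≤ 0 := by
  obtain ⟨q, rfl⟩ : ∃ q, n = 2 * p + q := ⟨n - 2 * p, by omega⟩
  clear hpn haux1
  set e : ℕ → ℝ := eta1 (2 * p + q) η with he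
  -- monotonicity of `e` on the valid range
  have hm : ∀ i j : ℕ, i ≤ j → j ≤ 2 * p + q + 1 → e i ≤ e j := by
    intro i j hij hj
    have hi' : i - 1 < 2 * p + q + 1 := by omega
    have hj' : j - 1 < 2 * p + q + 1 := by omega
    show eta1 (2 * p + q) η i ≤ eta1 (2 * p + q) η j
    rw [eta1, eta1, dif_pos hi', dif_pos hj']
    exact hmono (Fin.mk_le_mk.mpr (Nat.sub_le_sub_right hij 1))
  -- nonnegativity of `e`
  have hnn : ∀ i : ℕ, 0 ≤ e i := by
    intro i
    show 0 ≤ eta1 (2 * p + q) η i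
    rw [eta1]
    split
    · rename_i h
      have h0 : eta1 (2 * p + q) η 1 = η ⟨0, by omega⟩ := by
        rw [eta1, dif_pos (by omega : (1:ℕ) - 1 < 2 * p + q + 1)]
      calc (0:ℝ) = η ⟨0, by omega⟩ := by rw [← h0]; exact h1.symm
        _ ≤ η ⟨i - 1, h⟩ := hmono (Fin.mk_le_mk.mpr (Nat.zero_le _))
    · exact le_refl 0
  have he1 : e 1 = 0 := h1
  -- interval conversions
  have hIcc1 : ∀ k : ℕ, Finset.Icc 1 k = Finset.Ioc 0 k := by
    intro k; ext x; simp only [mem_Icc, mem_Ioc]; omega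
  have hIcc2 : Finset.Icc 2 (2 * p + q) = Finset.Ioc 1 (2 * p + q) := by
    ext x; simp only [mem_Icc, mem_Ioc]; omega
  have hIccT : Finset.Icc (2 * p + q + 3 - p) (2 * p + q)
      = Finset.Ioc (p + q + 2) (2 * p + q) := by
    ext x; simp only [mem_Icc, mem_Ioc]; omega
  have hsig : ∀ k : ℕ, sig (2 * p + q) η k = ∑ i ∈ Finset.Ioc 0 k, e i := by
    intro k; rw [sig, hIcc1]
  have hsingle : ∀ m k : ℕ, m + 1 = k → Finset.Ioc m k = {k} := by
    intro m k h; ext x; simp only [mem_Ioc, mem_singleton]; omega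
  have hidx : 2 * p + q + 2 - p = p + q + 2 := by omega
  -- dropping the zero first term
  have split0 : ∀ k : ℕ, 1 ≤ k →
      (∑ i ∈ Finset.Ioc 0 k, e i) = ∑ i ∈ Finset.Ioc 1 k, e i := by
    intro k hk
    rw [← Finset.sum_Ioc_consecutive e (Nat.zero_le 1) hk, hsingle 0 1 rfl,
      Finset.sum_singleton, he1, zero_add]
  simp only [hidx, hIcc2, hIccT, hsig] at haux2 ⊢
  rw [split0 (p + 1) (by omega)] at haux2
  -- splitting the sums into basic pieces
  have hsp : (∑ i ∈ Finset.Ioc 0 p, e i)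
      = (∑ i ∈ Finset.Ioc 1 (p + 1), e i) - e (p + 1) := by
    have t1 := Finset.sum_Ioc_consecutive e (Nat.zero_le p) (by omega : p ≤ p + 1)
    rw [hsingle p (p + 1) rfl, Finset.sum_singleton] at t1
    rw [← split0 (p + 1) (by omega)]
    linarith
  have hS : (∑ i ∈ Finset.Ioc 0 (p + q + 2), e i)
      = (∑ i ∈ Finset.Ioc 1 (p + 1), e i) + (∑ i ∈ Finset.Ioc (p + 1) (p + q + 1), e i)
        + e (p + q + 2) := by
    have t1 := Finset.sum_Ioc_consecutive e (Nat.zero_le (p + 1))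
      (by omega : p + 1 ≤ p + q + 2)
    have t2 := Finset.sum_Ioc_consecutive e (by omega : p + 1 ≤ p + q + 1)
      (by omega : p + q + 1 ≤ p + q + 2)
    rw [hsingle (p + q + 1) (p + q + 2) rfl, Finset.sum_singleton] at t2
    rw [split0 (p + 1) (by omega)] at t1
    linarith
  have hN1 : (∑ i ∈ Finset.Ioc 0 (2 * p + q + 1), e i)
      = (∑ i ∈ Finset.Ioc 0 (p + q + 2), e i)
        + (∑ i ∈ Finset.Ioc (p + q + 2) (2 * p + q), e i) + e (2 * p + q + 1) := by
    have t1 := Finset.sum_Ioc_consecutive e (Nat.zero_le (p + q + 2))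
      (by omega : p + q + 2 ≤ 2 * p + q)
    have t2 := Finset.sum_Ioc_consecutive e (Nat.zero_le (2 * p + q))
      (by omega : 2 * p + q ≤ 2 * p + q + 1)
    rw [hsingle (2 * p + q) (2 * p + q + 1) rfl, Finset.sum_singleton] at t2
    linarith
  have hQ : (∑ i ∈ Finset.Ioc 1 (2 * p + q), e i ^ 2)
      = (∑ i ∈ Finset.Ioc 1 (p + 1), e i ^ 2)
        + (∑ i ∈ Finset.Ioc (p + 1) (p + q + 1), e i ^ 2)
        + (∑ i ∈ Finset.Ioc (p + q + 1) (2 * p + q), e i ^ 2) := by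
    have t1 := Finset.sum_Ioc_consecutive (fun i => e i ^ 2)
      (by omega : (1:ℕ) ≤ p + 1) (by omega : p + 1 ≤ 2 * p + q)
    have t2 := Finset.sum_Ioc_consecutive (fun i => e i ^ 2)
      (by omega : p + 1 ≤ p + q + 1) (by omega : p + q + 1 ≤ 2 * p + q)
    linarith
  rw [hN1, hS, hsp, hQ]
  -- abbreviations
  set σ1 := ∑ i ∈ Finset.Ioc 1 (p + 1), e i with hσ1
  set M1 := ∑ i ∈ Finset.Ioc (p + 1) (p + q + 1), e i with hM1
  set T := ∑ i ∈ Finset.Ioc (p + q + 2) (2 * p + q), e i with hT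
  set Q1 := ∑ i ∈ Finset.Ioc 1 (p + 1), e i ^ 2 with hQ1
  set Q2 := ∑ i ∈ Finset.Ioc (p + 1) (p + q + 1), e i ^ 2 with hQ2
  set Q3 := ∑ i ∈ Finset.Ioc (p + q + 1) (2 * p + q), e i ^ 2 with hQ3
  set a := e p with ha
  set b := e (p + 1) with hb
  set c := e (p + q + 2) with hc
  set E := e (2 * p + q + 1) with hE
  have hab : a ≤ b := hm p (p + 1) (by omega) (by omega)
  have hbE : b ≤ E := hm (p + 1) (2 * p + q + 1) (by omega) (by omega)
  have hbc : b ≤ c := hm (p + 1) (p + q + 2) (by omega) (by omega)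
  have hcE : c ≤ E := hm (p + q + 2) (2 * p + q + 1) (by omega) (by omega)
  have hann : 0 ≤ a := hnn p
  have hbnn : 0 ≤ b := hnn (p + 1)
  have hσnn : 0 ≤ σ1 := Finset.sum_nonneg fun i _ => hnn i
  have hM1nn : 0 ≤ M1 := Finset.sum_nonneg fun i _ => hnn i
  have hTnn : 0 ≤ T := Finset.sum_nonneg fun i _ => hnn i
  have hU : 0 ≤ σ1 - T := by linarith
  clear_value σ1 M1 T Q1 Q2 Q3 a b c E
  -- `U ≤ a + b` : the defect is at most the top two entries of `σ_{p+1}`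
  have hUub : σ1 - T ≤ a + b := by
    have hsplit : σ1 = (∑ i ∈ Finset.Ioc 1 (p - 1), e i)
        + ∑ i ∈ Finset.Ioc (p - 1) (p + 1), e i := by
      rw [hσ1, ← Finset.sum_Ioc_consecutive e (by omega : (1:ℕ) ≤ p - 1)
        (by omega : p - 1 ≤ p + 1)]
    have hpair : Finset.Ioc (p - 1) (p + 1) = {p, p + 1} := by
      ext x; simp only [mem_Ioc, mem_insert, mem_singleton]; omega
    have hpairsum : (∑ i ∈ Finset.Ioc (p - 1) (p + 1), e i) = a + b := by
      rw [hpair, Finset.sum_pair (by omega : p ≠ p + 1), ha, hb]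
    have hle1 : (∑ i ∈ Finset.Ioc 1 (p - 1), e i) ≤ (p - 1 - 1) • e (p - 1) := by
      have h := Finset.sum_le_card_nsmul (Finset.Ioc 1 (p - 1)) e (e (p - 1))
        (fun i hi => hm i (p - 1) (Finset.mem_Ioc.mp hi).2 (by omega))
      rwa [Nat.card_Ioc] at h
    have hle2 : (p - 1 - 1) • e (p - 1) ≤ T := by
      have h := Finset.card_nsmul_le_sum (Finset.Ioc (p + q + 2) (2 * p + q)) e (e (p - 1))
        (fun i hi => by
          obtain ⟨hi1, hi2⟩ := Finset.mem_Ioc.mp hi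
          exact hm (p - 1) i (by omega) (by omega))
      rw [Nat.card_Ioc] at h
      have hcard : 2 * p + q - (p + q + 2) = p - 1 - 1 := by omega
      rw [hcard] at h
      rw [hT]; exact h
    linarith
  have habnn : (0:ℝ) ≤ a + b := by linarith
  -- main estimates
  have G1 : (σ1 + M1 + c - E) * (σ1 - T) ≤ σ1 * (a + b) + M1 * (a + b) := by
    rcases le_or_gt (σ1 + M1 + c - E) 0 with h | h
    · nlinarith [mul_nonneg (neg_nonneg.mpr h) hU, mul_nonneg hσnn habnn,
        mul_nonneg hM1nn habnn]
    · calc (σ1 + M1 + c - E) * (σ1 - T) ≤ (σ1 + M1) * (a + b) :=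
            mul_le_mul (by linarith) hUub hU (by linarith)
        _ = σ1 * (a + b) + M1 * (a + b) := by ring
  have G2 : σ1 * (a + b) ≤ Q1 + (p : ℝ) * b ^ 2 := by
    have key : ∀ i ∈ Finset.Ioc 1 (p + 1), e i * (a + b) ≤ e i ^ 2 + b ^ 2 := by
      intro i hi
      have h1 : e i ≤ b := by
        rw [hb]; exact hm i (p + 1) (Finset.mem_Ioc.mp hi).2 (by omega)
      have h2 : 0 ≤ e i := hnn i
      nlinarith [sq_nonneg (b - e i), mul_nonneg h2 (by linarith : (0:ℝ) ≤ b - a)]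
    calc σ1 * (a + b) = ∑ i ∈ Finset.Ioc 1 (p + 1), e i * (a + b) := by
          rw [hσ1, Finset.sum_mul]
      _ ≤ ∑ i ∈ Finset.Ioc 1 (p + 1), (e i ^ 2 + b ^ 2) := Finset.sum_le_sum key
      _ = Q1 + (p : ℝ) * b ^ 2 := by
          rw [Finset.sum_add_distrib, Finset.sum_const, Nat.card_Ioc, hQ1]
          have : p + 1 - 1 = p := by omega
          rw [this, nsmul_eq_mul]
  have G3 : M1 * (a + b) ≤ E * M1 + Q2 := by
    have key : ∀ i ∈ Finset.Ioc (p + 1) (p + q + 1),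
        e i * (a + b) ≤ E * e i + e i ^ 2 := by
      intro i hi
      obtain ⟨hi1, hi2⟩ := Finset.mem_Ioc.mp hi
      have h1 : b ≤ e i := by
        rw [hb]; exact hm (p + 1) i (by omega) (by omega)
      have h2 : a ≤ E := by linarith
      have h3 : 0 ≤ e i := hnn i
      nlinarith [mul_le_mul_of_nonneg_left h2 h3, mul_le_mul_of_nonneg_left h1 h3]
    calc M1 * (a + b) = ∑ i ∈ Finset.Ioc (p + 1) (p + q + 1), e i * (a + b) := by
          rw [hM1, Finset.sum_mul]
      _ ≤ ∑ i ∈ Finset.Ioc (p + 1) (p + q + 1), (E * e i + e i ^ 2) :=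
          Finset.sum_le_sum key
      _ = E * M1 + Q2 := by
          rw [Finset.sum_add_distrib, ← Finset.mul_sum, ← hM1, ← hQ2]
  have G4 : (p : ℝ) * b ^ 2 ≤ E * c + Q3 := by
    have h1 : (p - 1) • (b ^ 2) ≤ Q3 := by
      have h := Finset.card_nsmul_le_sum (Finset.Ioc (p + q + 1) (2 * p + q))
        (fun i => e i ^ 2) (b ^ 2) (fun i hi => by
          obtain ⟨hi1, hi2⟩ := Finset.mem_Ioc.mp hi
          have hb' : b ≤ e i := by
            rw [hb]; exact hm (p + 1) i (by omega) (by omega)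
          exact pow_le_pow_left₀ hbnn hb' 2)
      rw [Nat.card_Ioc] at h
      have hcard : 2 * p + q - (p + q + 1) = p - 1 := by omega
      rw [hcard] at h
      rw [hQ3]; exact h
    have h2 : b ^ 2 ≤ E * c := by
      calc b ^ 2 = b * b := by ring
        _ ≤ E * c := mul_le_mul hbE hbc hbnn (hbnn.trans hbE)
    have h3 : ((p - 1 : ℕ) : ℝ) = (p : ℝ) - 1 := by
      rw [Nat.cast_sub (by omega : 1 ≤ p)]; norm_num
    rw [nsmul_eq_mul, h3] at h1
    linarith [h1, h2]
  linarith [G1, G2, G3, G4]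
end
end

section
/- Let η : Fin (n+1) → ℝ be nondecreasing with η₁ ≤ 0, σ_k its partial sums, and suppose σ_{p+1} ≥ p for some 2 ≤ p ≤ n/2. Writing θ_p = σ_{p+1} − η₁, one has σ_{n+2−p} ≥ ((n+1−p)/p)·θ_p + η₁ ≥ (n+1−p) − η₁·(n+1−2p)/p ≥ n+1−p. -/
/-!
Put `f i = η_{i+2}`. Then `σ_{p+1} − η₁` and `σ_{n+2−p} − η₁` are the sums of the first `p` and
the first `n+1−p ≥ p` terms of the nondecreasing sequence `f`, and initial averages of a
nondecreasing sequence increase; this is the first inequality. The second is the identity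
`LHS − RHS = ((n+1−p)/p)(σ_{p+1} − p)`, and the third holds because `η₁ ≤ 0 ≤ n+1−2p`.
-/

noncomputable section
open Finset

/-- Chebyshev's sum inequality for `f` against the indicator of `[0, k)`. -/
theorem MonotoneOn.card_mul_sum_range_le {α : Type*} [Semiring α] [LinearOrder α]
    [IsStrictOrderedRing α] [ExistsAddOfLE α] {f : ℕ → α} {k m : ℕ}
    (hf : MonotoneOn f (Set.Iio m)) (hkm : k ≤ m) :
    (m : α) * ∑ i ∈ range k, f i ≤ k * ∑ i ∈ range m, f i := by
  let g : ℕ → α := fun i => if i < k then 1 else 0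
  have hfg : AntivaryOn f g (range m) := by
    intro i hi j hj hgij
    simp only [g] at hgij
    split_ifs at hgij with hik hjk <;> norm_num at hgij
    exact hf (by simpa using hj) (by simpa using hi) (by omega)
  have hrange : {i ∈ range m | i < k} = range k := by
    ext i
    simp only [mem_filter, mem_range]
    omega
  have h := hfg.card_mul_sum_le_sum_mul_sum
  simp only [g, mul_ite, mul_one, mul_zero, ← sum_filter, hrange, card_range, sum_const,
    nsmul_one] at h
  rwa [Nat.cast_comm k]

theorem eta1_add_one {n i : ℕ} (η : Fin (n+1) → ℝ) (hi : i < n + 1) :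
    eta1 n η (i + 1) = η ⟨i, hi⟩ := by
  simp [eta1, hi]

theorem eta1_add_two_monotoneOn {n : ℕ} {η : Fin (n+1) → ℝ} (hη : Monotone η) :
    MonotoneOn (fun i => eta1 n η (i + 2)) (Set.Iio n) := by
  intro i hi j hj hij
  have hi' : i + 1 < n + 1 := Nat.succ_lt_succ hi
  have hj' : j + 1 < n + 1 := Nat.succ_lt_succ hj
  simp only [show ∀ l, l + 2 = l + 1 + 1 from fun _ => rfl, eta1_add_one η hi',
    eta1_add_one η hj']
  exact hη (Fin.mk_le_mk.mpr (Nat.succ_le_succ hij))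

theorem sig_add_one_sub_eta1_one (n : ℕ) (η : Fin (n+1) → ℝ) (k : ℕ) :
    sig n η (k + 1) - eta1 n η 1 = ∑ i ∈ range k, eta1 n η (i + 2) := by
  rw [sig, ← Ico_add_one_right_eq_Icc, sum_Ico_eq_sum_range, Nat.add_sub_cancel,
    sum_range_succ']
  simp only [add_comm 1, add_assoc, add_sub_cancel_right]

/-- for nondecreasing `η` with `η₁ ≤ 0`, `2 ≤ p ≤ n/2` and
`σ_{p+1} ≥ p`, writing `θ_p = σ_{p+1} − η₁` one has
`σ_{n+2−p} ≥ ((n+1−p)/p)θ_p + η₁ ≥ (n+1−p) − η₁(n+1−2p)/p ≥ n+1−p`. -/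
theorem sigma_chain_nonpos_case (n p : ℕ) (η : Fin (n+1) → ℝ) (hmono : Monotone η)
    (h1 : eta1 n η 1 ≤ 0) (hp : 2 ≤ p) (hpn : 2 * p ≤ n)
    (hs : (p : ℝ) ≤ sig n η (p + 1)) :
    sig n η (n + 2 - p) ≥
        (((n : ℝ) + 1 - p) / p) * (sig n η (p + 1) - eta1 n η 1) + eta1 n η 1 ∧
    (((n : ℝ) + 1 - p) / p) * (sig n η (p + 1) - eta1 n η 1) + eta1 n η 1 ≥
        ((n : ℝ) + 1 - p) - eta1 n η 1 * ((n : ℝ) + 1 - 2 * p) / p ∧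
    ((n : ℝ) + 1 - p) - eta1 n η 1 * ((n : ℝ) + 1 - 2 * p) / p ≥
        (n : ℝ) + 1 - p := by
  set e := eta1 n η 1
  have hp0 : (0 : ℝ) < p := Nat.cast_pos.mpr (by omega)
  have hpn' : (2 * p : ℝ) ≤ n := by exact_mod_cast hpn
  have hm : ((n + 1 - p : ℕ) : ℝ) = n + 1 - p := by
    rw [Nat.cast_sub (by omega), Nat.cast_add_one]
  have havg := ((eta1_add_two_monotoneOn hmono).mono (Set.Iio_subset_Iio (by omega :
    n + 1 - p ≤ n))).card_mul_sum_range_le (by omega : p ≤ n + 1 - p)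
  rw [hm, ← sig_add_one_sub_eta1_one, ← sig_add_one_sub_eta1_one,
    show n + 1 - p + 1 = n + 2 - p by omega] at havg
  refine ⟨?_, ?_, ?_⟩
  · have : ((n : ℝ) + 1 - p) / p * (sig n η (p + 1) - e) ≤ sig n η (n + 2 - p) - e := by
      rw [div_mul_eq_mul_div, div_le_iff₀ hp0]
      linarith
    linarith
  · have hdiff : ((n : ℝ) + 1 - p) / p * (sig n η (p + 1) - e) + e -
        ((n + 1 - p) - e * (n + 1 - 2 * p) / p) =
          ((n : ℝ) + 1 - p) / p * (sig n η (p + 1) - p) := by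
      field_simp
      ring
    have := mul_nonneg (div_nonneg (by linarith) hp0.le : 0 ≤ ((n : ℝ) + 1 - p) / p)
      (sub_nonneg.mpr hs)
    linarith
  · have : e * ((n : ℝ) + 1 - 2 * p) / p ≤ 0 :=
      div_nonpos_of_nonpos_of_nonneg (mul_nonpos_of_nonpos_of_nonneg h1 (by linarith)) hp0.le
    linarith
end
end

section
/- Let η : Fin (n+1) → ℝ be nondecreasing with partial sums σ_k, let s ≥ 0 and c ≥ 0 be constants, and suppose 2 ≤ p ≤ n/2, η₁ ≤ s, and σ_{p+1} ≥ p + s + (4c²⌊n/2⌋)/(n+1−p). Then σ_{n+2−p} ≥ (n+1−p) + s + (4c²⌊n/2⌋)/p ≥ n+1−p. -/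
noncomputable section
open Finset

lemma sigma_chain_aux (P N s e1 ep σ S T u v A : ℝ)
    (hP : 0 < P) (hM0 : 0 ≤ N + 1 - 2*P)
    (h1 : e1 ≤ s) (hsplit : T = σ + S) (hlow : (N + 1 - 2*P) * ep ≤ S)
    (hup2 : σ ≤ e1 + P * ep) (hsg : σ ≥ P + s + u)
    (hu : u * (N + 1 - P) = A) (hv : v * P = A) :
    T ≥ (N + 1 - P) + s + v := by
  have hD : 0 < N + 1 - P := by linarith
  have hx1 : P * (S - (N + 1 - 2*P) * ep) ≥ 0 := mul_nonneg hP.le (by linarith)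
  have hx2 : (N + 1 - 2*P) * (P * ep - (σ - e1)) ≥ 0 := mul_nonneg hM0 (by linarith)
  have hx3 : (N + 1 - P) * (σ - (P + s + u)) ≥ 0 := mul_nonneg hD.le (by linarith)
  have hx4 : (N + 1 - 2*P) * (s - e1) ≥ 0 := mul_nonneg hM0 (by linarith)
  have key : P * T ≥ P * ((N + 1 - P) + s + v) := by nlinarith [hx1, hx2, hx3, hx4]
  exact le_of_mul_le_mul_left key hP

/-- for nondecreasing `η`, constants `s, c ≥ 0`, `2 ≤ p ≤ n/2`,
`η₁ ≤ s` and `σ_{p+1} ≥ p + s + 4c²⌊n/2⌋/(n+1−p)`, one has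
`σ_{n+2−p} ≥ (n+1−p) + s + 4c²⌊n/2⌋/p ≥ n+1−p`. -/
theorem sigma_chain_nonneg_case (n p : ℕ) (η : Fin (n+1) → ℝ) (hmono : Monotone η)
    (s c : ℝ) (hs : 0 ≤ s) (hc : 0 ≤ c) (hp : 2 ≤ p) (hpn : 2 * p ≤ n)
    (h1 : eta1 n η 1 ≤ s)
    (hsig : sig n η (p + 1) ≥
        (p : ℝ) + s + 4 * c ^ 2 * ((n / 2 : ℕ) : ℝ) / ((n : ℝ) + 1 - p)) :
    sig n η (n + 2 - p) ≥
        ((n : ℝ) + 1 - p) + s + 4 * c ^ 2 * ((n / 2 : ℕ) : ℝ) / p ∧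
    ((n : ℝ) + 1 - p) + s + 4 * c ^ 2 * ((n / 2 : ℕ) : ℝ) / p ≥
        (n : ℝ) + 1 - p := by
  have hP0 : (0:ℝ) < p := by exact_mod_cast (show 0 < p by omega)
  have hNP : (2 * p : ℝ) ≤ n := by exact_mod_cast hpn
  have hD1 : (0:ℝ) < (n:ℝ) + 1 - p := by linarith
  set A : ℝ := 4 * c ^ 2 * ((n / 2 : ℕ) : ℝ) with hAdef
  have hA0 : 0 ≤ A := by positivity
  have hv0 : 0 ≤ A / p := div_nonneg hA0 hP0.le
  have hu_eq : A / ((n:ℝ) + 1 - p) * ((n:ℝ) + 1 - p) = A :=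
    div_mul_cancel₀ _ hD1.ne'
  have hv_eq : A / p * p = A := div_mul_cancel₀ _ hP0.ne'
  -- split Icc 1 k as Ioc 0 k
  have hIoc : ∀ k : ℕ, Finset.Icc 1 k = Finset.Ioc 0 k := fun k => Finset.Icc_add_one_left_eq_Ioc 0 k
  have hsplit : sig n η (n + 2 - p) = sig n η (p + 1) +
      ∑ i ∈ Finset.Ioc (p+1) (n+2-p), eta1 n η i := by
    unfold sig
    rw [hIoc, hIoc,
      ← Finset.sum_Ioc_consecutive _ (by omega : (0:ℕ) ≤ p+1) (by omega : p+1 ≤ n+2-p)]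
  have hmono' : ∀ i j : ℕ, j ≤ n + 1 → i ≤ j → eta1 n η i ≤ eta1 n η j := by
    intro i j hj hij
    unfold eta1
    have hi' : i - 1 < n + 1 := by omega
    have hj' : j - 1 < n + 1 := by omega
    rw [dif_pos hi', dif_pos hj']
    exact hmono (by simp only [Fin.mk_le_mk]; omega)
  -- tail lower bound
  have hlow : ((n+1-2*p : ℕ):ℝ) * eta1 n η (p+1) ≤
      ∑ i ∈ Finset.Ioc (p+1) (n+2-p), eta1 n η i := by
    have h := Finset.card_nsmul_le_sum (Finset.Ioc (p+1) (n+2-p)) (eta1 n η)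
      (eta1 n η (p+1)) (fun i hi => by
        simp only [Finset.mem_Ioc] at hi
        exact hmono' (p+1) i (by omega) (by omega))
    simpa [Nat.card_Ioc, nsmul_eq_mul, show n+2-p-(p+1) = n+1-2*p by omega] using h
  -- average upper bound
  have hup : ∑ i ∈ Finset.Ioc 1 (p+1), eta1 n η i ≤ (p:ℝ) * eta1 n η (p+1) := by
    have h := Finset.sum_le_card_nsmul (Finset.Ioc 1 (p+1)) (eta1 n η)
      (eta1 n η (p+1)) (fun i hi => by
        simp only [Finset.mem_Ioc] at hi
        exact hmono' i (p+1) (by omega) (by omega))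
    simpa [Nat.card_Ioc, nsmul_eq_mul] using h
  have hsig1 : sig n η (p+1) = eta1 n η 1 + ∑ i ∈ Finset.Ioc 1 (p+1), eta1 n η i := by
    unfold sig
    rw [hIoc, ← Finset.sum_Ioc_consecutive _ (by omega : (0:ℕ) ≤ 1) (by omega : 1 ≤ p+1)]
    congr 1
    rw [show Finset.Ioc 0 1 = {1} by decide]
    simp
  have hMcast : ((n+1-2*p : ℕ):ℝ) = (n:ℝ) + 1 - 2*p := by
    rw [Nat.cast_sub (by omega)]; push_cast; ring
  set σ := sig n η (p+1)
  set T := sig n η (n+2-p)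
  set e1 := eta1 n η 1
  set ep := eta1 n η (p+1)
  set S := ∑ i ∈ Finset.Ioc (p+1) (n+2-p), eta1 n η i
  set M : ℝ := ((n+1-2*p : ℕ):ℝ)
  have hM0 : 0 ≤ M := by positivity
  -- the four key product inequalities
  have hx1 : (p:ℝ) * (S - M * ep) ≥ 0 := mul_nonneg hP0.le (by linarith)
  have hx2 : M * ((p:ℝ) * ep - (σ - e1)) ≥ 0 := mul_nonneg hM0 (by linarith)
  have hx3 : ((n:ℝ)+1-p) * (σ - ((p:ℝ) + s + A / ((n:ℝ)+1-p))) ≥ 0 :=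
    mul_nonneg hD1.le (by linarith)
  have hx4 : M * (s - e1) ≥ 0 := mul_nonneg hM0 (by linarith)
  constructor
  · exact sigma_chain_aux (p:ℝ) (n:ℝ) s e1 ep σ S T (A/((n:ℝ)+1-p)) (A/p) A
      hP0 (by linarith) h1 hsplit (by simpa [hMcast] using hlow)
      (by linarith [hsig1, hup]) hsig hu_eq hv_eq
  · linarith
end
end
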